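/- arXiv:1401.4965 — 4 statements merged into one kernel-verified Lean document; each statement's English description precedes it below -/
import Mathlib

section
/- Let G be a digraph and xy ∈ E(G) an arc. If a vertex z witnesses the dispensability of xy via condition (D1), (D3) or (D4), or a pair z₁, z₂ witnesses it via condition (D2) or (D5), then each such witness z (respectively z₁ and z₂) satisfies z ∈ N⁺[x] ∪ N⁻[x] and z ∈ N⁺[y] ∪ N⁻[y]. -/
/-- Closed out-neighborhood `N⁺[v] = {v} ∪ {x : vx ∈ E}`. -/
def Nout {V : Type*} (E : V → V → Prop) (v : V) : Set V := insert v {x | E v x}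

/-- Closed in-neighborhood `N⁻[v] = {v} ∪ {x : xv ∈ E}`. -/
def Nin {V : Type*} (E : V → V → Prop) (v : V) : Set V := insert v {x | E x v}

/-- Condition (3) for a family of closed neighborhoods `N`:
`N[x] ∩ N[y] ⊊ N[x] ∩ N[z]` and `N[x] ∩ N[y] ⊊ N[y] ∩ N[z]`. -/
def NCond3 {V : Type*} (N : V → Set V) (x y z : V) : Prop :=
  N x ∩ N y ⊂ N x ∩ N z ∧ N x ∩ N y ⊂ N y ∩ N z

/-- The N-condition for a family of closed neighborhoods `N`: one of
(1) `N[x] ⊊ N[z] ⊊ N[y]`, (2) `N[y] ⊊ N[z] ⊊ N[x]`, or (3) `NCond3`. -/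
def NCond {V : Type*} (N : V → Set V) (x y z : V) : Prop :=
  (N x ⊂ N z ∧ N z ⊂ N y) ∨ (N y ⊂ N z ∧ N z ⊂ N x) ∨ NCond3 N x y z

/-- The weak N-condition: `N[x] ∩ N[y] ⊆ N[x] ∩ N[z]` and `N[x] ∩ N[y] ⊆ N[y] ∩ N[z]`. -/
def WeakNCond {V : Type*} (N : V → Set V) (x y z : V) : Prop :=
  N x ∩ N y ⊆ N x ∩ N z ∧ N x ∩ N y ⊆ N y ∩ N z

/-- Dispensability condition (D1): some `z` satisfies both the `N⁺`- and the
`N⁻`-condition with `xy`. -/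
def D1 {V : Type*} (E : V → V → Prop) (x y : V) : Prop :=
  ∃ z : V, NCond (Nout E) x y z ∧ NCond (Nin E) x y z

/-- Dispensability condition (D2). -/
def D2 {V : Type*} (E : V → V → Prop) (x y : V) : Prop :=
  ∃ z₁ z₂ : V, (NCond3 (Nout E) x y z₁ ∧ WeakNCond (Nin E) x y z₁) ∧
    (NCond3 (Nin E) x y z₂ ∧ WeakNCond (Nout E) x y z₂)

/-- Dispensability condition (D3). -/
def D3 {V : Type*} (E : V → V → Prop) (x y : V) : Prop :=
  ∃ z : V, NCond (Nout E) x y z ∧ (Nin E x = Nin E z ∨ Nin E y = Nin E z)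

/-- Dispensability condition (D4). -/
def D4 {V : Type*} (E : V → V → Prop) (x y : V) : Prop :=
  ∃ z : V, NCond (Nin E) x y z ∧ (Nout E x = Nout E z ∨ Nout E y = Nout E z)

/-- Dispensability condition (D5). -/
def D5 {V : Type*} (E : V → V → Prop) (x y : V) : Prop :=
  ∃ z₁ z₂ : V, z₁ ≠ z₂ ∧ z₁ ≠ x ∧ z₁ ≠ y ∧ z₂ ≠ x ∧ z₂ ≠ y ∧
    Nout E x = Nout E z₁ ∧ Nin E x = Nin E z₂ ∧ Nin E z₁ = Nin E y ∧ Nout E z₂ = Nout E y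

/-- An arc `xy` is dispensable if one of (D1)–(D5) holds. -/
def Dispensable {V : Type*} (E : V → V → Prop) (x y : V) : Prop :=
  D1 E x y ∨ D2 E x y ∨ D3 E x y ∨ D4 E x y ∨ D5 E x y

/-- Arc relation of the Cartesian skeleton `𝕊(G)`: the non-dispensable arcs of `G`. -/
def SkelAdj {V : Type*} (E : V → V → Prop) (x y : V) : Prop :=
  E x y ∧ ¬ Dispensable E x y

section Aux
variable {V : Type*} {E : V → V → Prop}

lemma self_mem_Nout (v : V) : v ∈ Nout E v := Set.mem_insert _ _
lemma self_mem_Nin (v : V) : v ∈ Nin E v := Set.mem_insert _ _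
lemma mem_Nout_of_E {a b : V} (h : E a b) : b ∈ Nout E a := Set.mem_insert_of_mem _ h
lemma mem_Nin_of_E {a b : V} (h : E a b) : a ∈ Nin E b := Set.mem_insert_of_mem _ h

lemma nin_of_mem_nout {a b : V} (h : a ∈ Nout E b) : b ∈ Nin E a := by
  rcases h with h | h
  · exact h ▸ self_mem_Nin a
  · exact Set.mem_insert_of_mem _ h

lemma nout_of_mem_nin {a b : V} (h : a ∈ Nin E b) : b ∈ Nout E a := by
  rcases h with h | h
  · exact h ▸ self_mem_Nout a
  · exact Set.mem_insert_of_mem _ h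

variable {x y z : V}

/-- y-side from the N⁺-condition -/
lemma ySide_out (hxy : E x y) (h : NCond (Nout E) x y z) :
    z ∈ Nout E y ∪ Nin E y := by
  rcases h with ⟨_, h2⟩ | ⟨h1, _⟩ | ⟨_, h3⟩
  · exact Or.inl (h2.subset (self_mem_Nout z))
  · exact Or.inr (nin_of_mem_nout (h1.subset (self_mem_Nout y)))
  · have hy : y ∈ Nout E x ∩ Nout E y := ⟨mem_Nout_of_E hxy, self_mem_Nout y⟩
    exact Or.inr (nin_of_mem_nout (h3.subset hy).2)

/-- x-side from the N⁻-condition -/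
lemma xSide_in (hxy : E x y) (h : NCond (Nin E) x y z) :
    z ∈ Nout E x ∪ Nin E x := by
  rcases h with ⟨h1, _⟩ | ⟨_, h2⟩ | ⟨h3, _⟩
  · exact Or.inl (nout_of_mem_nin (h1.subset (self_mem_Nin x)))
  · exact Or.inr (h2.subset (self_mem_Nin z))
  · have hx : x ∈ Nin E x ∩ Nin E y := ⟨self_mem_Nin x, mem_Nin_of_E hxy⟩
    exact Or.inl (nout_of_mem_nin (h3.subset hx).2)

/-- x-side from the weak N⁻-condition -/
lemma xSide_weak_in (hxy : E x y) (h : Nin E x ∩ Nin E y ⊆ Nin E x ∩ Nin E z) :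
    z ∈ Nout E x ∪ Nin E x := by
  have hx : x ∈ Nin E x ∩ Nin E y := ⟨self_mem_Nin x, mem_Nin_of_E hxy⟩
  exact Or.inl (nout_of_mem_nin (h hx).2)

/-- y-side from the weak N⁺-condition -/
lemma ySide_weak_out (hxy : E x y) (h : Nout E x ∩ Nout E y ⊆ Nout E y ∩ Nout E z) :
    z ∈ Nout E y ∪ Nin E y := by
  have hy : y ∈ Nout E x ∩ Nout E y := ⟨mem_Nout_of_E hxy, self_mem_Nout y⟩
  exact Or.inr (nin_of_mem_nout (h hy).2)

end Aux

/-- If a vertex `z` witnesses dispensability of an arc `xy` via (D1), (D3) or (D4),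
or a pair `z₁, z₂` witnesses it via (D2) or (D5), then every such witness lies in
`N⁺[x] ∪ N⁻[x]` and in `N⁺[y] ∪ N⁻[y]`. -/
theorem dispensable_witness_mem {V : Type*} (E : V → V → Prop) (hirr : Irreflexive E)
    (x y : V) (hxy : E x y) :
    (∀ z : V,
      ((NCond (Nout E) x y z ∧ NCond (Nin E) x y z) ∨
       (NCond (Nout E) x y z ∧ (Nin E x = Nin E z ∨ Nin E y = Nin E z)) ∨
       (NCond (Nin E) x y z ∧ (Nout E x = Nout E z ∨ Nout E y = Nout E z))) →
      z ∈ Nout E x ∪ Nin E x ∧ z ∈ Nout E y ∪ Nin E y) ∧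
    (∀ z₁ z₂ : V,
      (((NCond3 (Nout E) x y z₁ ∧ WeakNCond (Nin E) x y z₁) ∧
        (NCond3 (Nin E) x y z₂ ∧ WeakNCond (Nout E) x y z₂)) ∨
       (z₁ ≠ z₂ ∧ z₁ ≠ x ∧ z₁ ≠ y ∧ z₂ ≠ x ∧ z₂ ≠ y ∧
        Nout E x = Nout E z₁ ∧ Nin E x = Nin E z₂ ∧
        Nin E z₁ = Nin E y ∧ Nout E z₂ = Nout E y)) →
      (z₁ ∈ Nout E x ∪ Nin E x ∧ z₁ ∈ Nout E y ∪ Nin E y) ∧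
      (z₂ ∈ Nout E x ∪ Nin E x ∧ z₂ ∈ Nout E y ∪ Nin E y)) := by
  constructor
  · intro z h
    rcases h with ⟨hout, hin⟩ | ⟨hout, heq⟩ | ⟨hin, heq⟩
    · exact ⟨xSide_in hxy hin, ySide_out hxy hout⟩
    · refine ⟨?_, ySide_out hxy hout⟩
      rcases heq with heq | heq
      · exact Or.inl (nout_of_mem_nin (heq ▸ self_mem_Nin x))
      · exact Or.inl (nout_of_mem_nin (heq ▸ mem_Nin_of_E hxy))
    · refine ⟨xSide_in hxy hin, ?_⟩
      rcases heq with heq | heq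
      · exact Or.inr (nin_of_mem_nout (heq ▸ mem_Nout_of_E hxy))
      · exact Or.inr (nin_of_mem_nout (heq ▸ self_mem_Nout y))
  · intro z₁ z₂ h
    rcases h with ⟨⟨h3o, hwin⟩, h3i, hwout⟩ |
      ⟨_, _, _, _, _, hox, hix, hiy, hoy⟩
    · refine ⟨⟨xSide_weak_in hxy hwin.1, ySide_out hxy (Or.inr (Or.inr h3o))⟩,
        xSide_in hxy (Or.inr (Or.inr h3i)), ySide_weak_out hxy hwout.2⟩
    · refine ⟨⟨Or.inl (hox ▸ self_mem_Nout z₁),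
        Or.inr (nin_of_mem_nout (hox ▸ mem_Nout_of_E hxy))⟩,
        ⟨Or.inr (hix ▸ self_mem_Nin z₂),
        Or.inl (hoy ▸ self_mem_Nout z₂ : z₂ ∈ Nout E y)⟩⟩
end

section
/- If H and K are thin digraphs, then the Cartesian skeleton of their strong product is a subgraph of the Cartesian product of their Cartesian skeletons: 𝕊(H ⊠ K) ⊆ 𝕊(H) □ 𝕊(K). -/
/-- A digraph is thin if distinct vertices have distinct closed out-neighborhoods or
distinct closed in-neighborhoods. -/
def Thin {V : Type*} (E : V → V → Prop) : Prop :=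
  ∀ x y : V, Nout E x = Nout E y → Nin E x = Nin E y → x = y

/-- Arc relation of the strong product of two digraphs. -/
def StrongAdj {V₁ V₂ : Type*} (E₁ : V₁ → V₁ → Prop) (E₂ : V₂ → V₂ → Prop) :
    V₁ × V₂ → V₁ × V₂ → Prop := fun x y =>
  (E₁ x.1 y.1 ∧ x.2 = y.2) ∨ (x.1 = y.1 ∧ E₂ x.2 y.2) ∨ (E₁ x.1 y.1 ∧ E₂ x.2 y.2)

/-- Arc relation of the Cartesian product of two digraphs. -/
def CartAdj {V₁ V₂ : Type*} (E₁ : V₁ → V₁ → Prop) (E₂ : V₂ → V₂ → Prop) :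
    V₁ × V₂ → V₁ × V₂ → Prop := fun x y =>
  (E₁ x.1 y.1 ∧ x.2 = y.2) ∨ (x.1 = y.1 ∧ E₂ x.2 y.2)

section helpers
variable {α β : Type*}

lemma prodS_left {S S' : Set α} {T : Set β} (h : S ⊆ S') (hw : ¬ S' ⊆ S) (hT : T.Nonempty) :
    S ×ˢ T ⊂ S' ×ˢ T := by
  obtain ⟨a, ha, hna⟩ := Set.not_subset.1 hw
  obtain ⟨b, hb⟩ := hT
  refine ⟨Set.prod_mono h subset_rfl, fun hcon => hna ?_⟩
  exact (hcon (Set.mk_mem_prod ha hb)).1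

lemma prodS_right {S : Set α} {T T' : Set β} (h : T ⊆ T') (hw : ¬ T' ⊆ T) (hS : S.Nonempty) :
    S ×ˢ T ⊂ S ×ˢ T' := by
  obtain ⟨b, hb, hnb⟩ := Set.not_subset.1 hw
  obtain ⟨a, ha⟩ := hS
  refine ⟨Set.prod_mono subset_rfl h, fun hcon => hnb ?_⟩
  exact (hcon (Set.mk_mem_prod ha hb)).2

/-- abstract versions of the conditions, as predicates on three sets -/
def NCond3S {γ : Type*} (P Q R : Set γ) : Prop := P ∩ Q ⊂ P ∩ R ∧ P ∩ Q ⊂ Q ∩ R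
def NCondS {γ : Type*} (P Q R : Set γ) : Prop :=
  (P ⊂ R ∧ R ⊂ Q) ∨ (Q ⊂ R ∧ R ⊂ P) ∨ NCond3S P Q R
def WeakS {γ : Type*} (P Q R : Set γ) : Prop := P ∩ Q ⊆ P ∩ R ∧ P ∩ Q ⊆ Q ∩ R

lemma cond3_z {A B : Set α} {C D : Set β} (hAB : (A ∩ B).Nonempty) (hCD : (C ∩ D).Nonempty)
    (hnBA : ¬ B ⊆ A) (hnCD : ¬ C ⊆ D) : NCond3S (A ×ˢ C) (B ×ˢ D) (B ×ˢ C) := by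
  constructor
  · rw [Set.prod_inter_prod, Set.prod_inter_prod, Set.inter_self]
    exact prodS_right Set.inter_subset_left
      (fun h => hnCD (h.trans Set.inter_subset_right)) hAB
  · rw [Set.prod_inter_prod, Set.prod_inter_prod, Set.inter_self, Set.inter_comm D C,
      Set.inter_comm A B]
    exact prodS_left Set.inter_subset_left
      (fun h => hnBA (h.trans Set.inter_subset_right)) hCD

lemma cond3_z' {A B : Set α} {C D : Set β} (hAB : (A ∩ B).Nonempty) (hCD : (C ∩ D).Nonempty)
    (hnAB : ¬ A ⊆ B) (hnDC : ¬ D ⊆ C) : NCond3S (A ×ˢ C) (B ×ˢ D) (A ×ˢ D) := by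
  constructor
  · rw [Set.prod_inter_prod, Set.prod_inter_prod, Set.inter_self]
    exact prodS_left Set.inter_subset_left
      (fun h => hnAB (h.trans Set.inter_subset_right)) hCD
  · rw [Set.prod_inter_prod, Set.prod_inter_prod, Set.inter_self, Set.inter_comm B A]
    exact prodS_right Set.inter_subset_right
      (fun h => hnDC (h.trans Set.inter_subset_left)) hAB

lemma weak_z {A B : Set α} {C D : Set β} : WeakS (A ×ˢ C) (B ×ˢ D) (B ×ˢ C) := by
  constructor
  · rw [Set.prod_inter_prod, Set.prod_inter_prod, Set.inter_self]
    exact Set.prod_mono subset_rfl Set.inter_subset_left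
  · rw [Set.prod_inter_prod, Set.prod_inter_prod, Set.inter_self, Set.inter_comm D C]
    exact Set.prod_mono Set.inter_subset_right subset_rfl

lemma weak_z' {A B : Set α} {C D : Set β} : WeakS (A ×ˢ C) (B ×ˢ D) (A ×ˢ D) := by
  constructor
  · rw [Set.prod_inter_prod, Set.prod_inter_prod, Set.inter_self]
    exact Set.prod_mono Set.inter_subset_left subset_rfl
  · rw [Set.prod_inter_prod, Set.prod_inter_prod, Set.inter_self, Set.inter_comm B A]
    exact Set.prod_mono subset_rfl Set.inter_subset_right

/-- The key case analysis: for nonempty intersections and `A ≠ B`, `C ≠ D`, either the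
full N-condition holds at both candidate witnesses, or condition (3) holds at one of them. -/
lemma key {A B : Set α} {C D : Set β} (hAB : (A ∩ B).Nonempty) (hCD : (C ∩ D).Nonempty)
    (hA : A ≠ B) (hC : C ≠ D) :
    (NCondS (A ×ˢ C) (B ×ˢ D) (B ×ˢ C) ∧ NCondS (A ×ˢ C) (B ×ˢ D) (A ×ˢ D)) ∨
      NCond3S (A ×ˢ C) (B ×ˢ D) (B ×ˢ C) ∨ NCond3S (A ×ˢ C) (B ×ˢ D) (A ×ˢ D) := by
  have hAne : A.Nonempty := hAB.mono Set.inter_subset_left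
  have hBne : B.Nonempty := hAB.mono Set.inter_subset_right
  have hCne : C.Nonempty := hCD.mono Set.inter_subset_left
  have hDne : D.Nonempty := hCD.mono Set.inter_subset_right
  by_cases hBA : B ⊆ A
  · have hnAB : ¬ A ⊆ B := fun h => hA (subset_antisymm h hBA)
    by_cases hDC : D ⊆ C
    · have hnCD : ¬ C ⊆ D := fun h => hC (subset_antisymm h hDC)
      left
      exact ⟨Or.inr (Or.inl ⟨prodS_right hDC hnCD hBne, prodS_left hBA hnAB hCne⟩),
        Or.inr (Or.inl ⟨prodS_left hBA hnAB hDne, prodS_right hDC hnCD hAne⟩)⟩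
    · exact Or.inr (Or.inr (cond3_z' hAB hCD hnAB hDC))
  · by_cases hCDs : C ⊆ D
    · have hnDC : ¬ D ⊆ C := fun h => hC (subset_antisymm hCDs h)
      by_cases hABs : A ⊆ B
      · left
        exact ⟨Or.inl ⟨prodS_left hABs hBA hCne, prodS_right hCDs hnDC hBne⟩,
          Or.inl ⟨prodS_right hCDs hnDC hAne, prodS_left hABs hBA hDne⟩⟩
      · exact Or.inr (Or.inr (cond3_z' hAB hCD hABs hnDC))
    · exact Or.inr (Or.inl (cond3_z hAB hCD hBA hCDs))

lemma keyOr {A B : Set α} {C D : Set β} (hAB : (A ∩ B).Nonempty) (hCD : (C ∩ D).Nonempty)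
    (hA : A ≠ B) (hC : C ≠ D) :
    NCondS (A ×ˢ C) (B ×ˢ D) (B ×ˢ C) ∨ NCondS (A ×ˢ C) (B ×ˢ D) (A ×ˢ D) := by
  rcases key hAB hCD hA hC with ⟨h, _⟩ | h | h
  · exact Or.inl h
  · exact Or.inl (Or.inr (Or.inr h))
  · exact Or.inr (Or.inr (Or.inr h))

end helpers
lemma Nout_strong {V₁ V₂ : Type*} (E₁ : V₁ → V₁ → Prop) (E₂ : V₂ → V₂ → Prop) (p : V₁ × V₂) :
    Nout (StrongAdj E₁ E₂) p = Nout E₁ p.1 ×ˢ Nout E₂ p.2 := by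
  ext ⟨u, v⟩
  simp only [Nout, StrongAdj, Set.mem_insert_iff, Set.mem_setOf_eq, Set.mem_prod, Prod.ext_iff]
  constructor
  · rintro (⟨h1,h2⟩|⟨h1,h2⟩|⟨h1,h2⟩|⟨h1,h2⟩) <;> simp_all [eq_comm]
  · rintro ⟨h1|h1, h2|h2⟩ <;> simp_all [eq_comm]

lemma Nin_strong {V₁ V₂ : Type*} (E₁ : V₁ → V₁ → Prop) (E₂ : V₂ → V₂ → Prop) (p : V₁ × V₂) :
    Nin (StrongAdj E₁ E₂) p = Nin E₁ p.1 ×ˢ Nin E₂ p.2 := by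
  ext ⟨u, v⟩
  simp only [Nin, StrongAdj, Set.mem_insert_iff, Set.mem_setOf_eq, Set.mem_prod, Prod.ext_iff]
  constructor
  · rintro (⟨h1,h2⟩|⟨h1,h2⟩|⟨h1,h2⟩|⟨h1,h2⟩) <;> simp_all [eq_comm]
  · rintro ⟨h1|h1, h2|h2⟩ <;> simp_all [eq_comm]

lemma NCond3_iff {V : Type*} (N : V → Set V) (x y z : V) :
    NCond3 N x y z ↔ NCond3S (N x) (N y) (N z) := Iff.rfl

lemma NCond_iff {V : Type*} (N : V → Set V) (x y z : V) :
    NCond N x y z ↔ NCondS (N x) (N y) (N z) := Iff.rfl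

lemma WeakNCond_iff {V : Type*} (N : V → Set V) (x y z : V) :
    WeakNCond N x y z ↔ WeakS (N x) (N y) (N z) := Iff.rfl

lemma ssubset_map {V W : Type*} {g : Set V → Set W}
    (hg : ∀ S T : Set V, S ⊆ T ↔ g S ⊆ g T) {S T : Set V} (hST : S ⊂ T) : g S ⊂ g T :=
  ⟨(hg _ _).1 hST.1, fun hc => hST.2 ((hg _ _).2 hc)⟩

lemma NCond3S_map {V W : Type*} {g : Set V → Set W}
    (hg : ∀ S T : Set V, S ⊆ T ↔ g S ⊆ g T)
    (hgi : ∀ S T : Set V, g (S ∩ T) = g S ∩ g T)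
    {P Q R : Set V} (h : NCond3S P Q R) : NCond3S (g P) (g Q) (g R) := by
  refine ⟨?_, ?_⟩ <;> rw [← hgi, ← hgi]
  · exact ssubset_map hg h.1
  · exact ssubset_map hg h.2

lemma NCondS_map {V W : Type*} {g : Set V → Set W}
    (hg : ∀ S T : Set V, S ⊆ T ↔ g S ⊆ g T)
    (hgi : ∀ S T : Set V, g (S ∩ T) = g S ∩ g T)
    {P Q R : Set V} (h : NCondS P Q R) : NCondS (g P) (g Q) (g R) := by
  rcases h with ⟨h1, h2⟩ | ⟨h1, h2⟩ | h3
  · exact Or.inl ⟨ssubset_map hg h1, ssubset_map hg h2⟩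
  · exact Or.inr (Or.inl ⟨ssubset_map hg h1, ssubset_map hg h2⟩)
  · exact Or.inr (Or.inr (NCond3S_map hg hgi h3))

lemma WeakS_map {V W : Type*} {g : Set V → Set W}
    (hg : ∀ S T : Set V, S ⊆ T ↔ g S ⊆ g T)
    (hgi : ∀ S T : Set V, g (S ∩ T) = g S ∩ g T)
    {P Q R : Set V} (h : WeakS P Q R) : WeakS (g P) (g Q) (g R) := by
  refine ⟨?_, ?_⟩ <;> rw [← hgi, ← hgi]
  · exact (hg _ _).1 h.1
  · exact (hg _ _).1 h.2

/-- Transfer of dispensability along a map `φ` whose closed neighborhoods are images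
under lattice embeddings `g` (for out-neighborhoods) and `g'` (for in-neighborhoods). -/
lemma dispensable_transfer {V W : Type*} (E : V → V → Prop) (F : W → W → Prop) (φ : V → W)
    (g g' : Set V → Set W)
    (hg : ∀ S T : Set V, S ⊆ T ↔ g S ⊆ g T)
    (hg' : ∀ S T : Set V, S ⊆ T ↔ g' S ⊆ g' T)
    (hgi : ∀ S T : Set V, g (S ∩ T) = g S ∩ g T)
    (hgi' : ∀ S T : Set V, g' (S ∩ T) = g' S ∩ g' T)
    (hout : ∀ u : V, Nout F (φ u) = g (Nout E u))
    (hin : ∀ u : V, Nin F (φ u) = g' (Nin E u))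
    (hφ : Function.Injective φ) {x y : V}
    (h : Dispensable E x y) : Dispensable F (φ x) (φ y) := by
  have tout : ∀ c : V, NCond (Nout E) x y c → NCond (Nout F) (φ x) (φ y) (φ c) := by
    intro c hc
    rw [NCond_iff, hout, hout, hout]
    exact NCondS_map hg hgi hc
  have tin : ∀ c : V, NCond (Nin E) x y c → NCond (Nin F) (φ x) (φ y) (φ c) := by
    intro c hc
    rw [NCond_iff, hin, hin, hin]
    exact NCondS_map hg' hgi' hc
  have tout3 : ∀ c : V, NCond3 (Nout E) x y c → NCond3 (Nout F) (φ x) (φ y) (φ c) := by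
    intro c hc
    rw [NCond3_iff, hout, hout, hout]
    exact NCond3S_map hg hgi hc
  have tin3 : ∀ c : V, NCond3 (Nin E) x y c → NCond3 (Nin F) (φ x) (φ y) (φ c) := by
    intro c hc
    rw [NCond3_iff, hin, hin, hin]
    exact NCond3S_map hg' hgi' hc
  have toutW : ∀ c : V, WeakNCond (Nout E) x y c → WeakNCond (Nout F) (φ x) (φ y) (φ c) := by
    intro c hc
    rw [WeakNCond_iff, hout, hout, hout]
    exact WeakS_map hg hgi hc
  have tinW : ∀ c : V, WeakNCond (Nin E) x y c → WeakNCond (Nin F) (φ x) (φ y) (φ c) := by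
    intro c hc
    rw [WeakNCond_iff, hin, hin, hin]
    exact WeakS_map hg' hgi' hc
  have toutEq : ∀ a b : V, Nout E a = Nout E b → Nout F (φ a) = Nout F (φ b) := by
    intro a b hab; rw [hout, hout, hab]
  have tinEq : ∀ a b : V, Nin E a = Nin E b → Nin F (φ a) = Nin F (φ b) := by
    intro a b hab; rw [hin, hin, hab]
  rcases h with ⟨z, h1, h2⟩ | ⟨z₁, z₂, ⟨a1, a2⟩, ⟨b1, b2⟩⟩ | ⟨z, h1, h2⟩ | ⟨z, h1, h2⟩ |
    ⟨z₁, z₂, hne, hx1, hy1, hx2, hy2, e1, e2, e3, e4⟩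
  · exact Or.inl ⟨φ z, tout z h1, tin z h2⟩
  · exact Or.inr (Or.inl ⟨φ z₁, φ z₂, ⟨tout3 z₁ a1, tinW z₁ a2⟩, ⟨tin3 z₂ b1, toutW z₂ b2⟩⟩)
  · exact Or.inr (Or.inr (Or.inl ⟨φ z, tout z h1, h2.imp (tinEq x z) (tinEq y z)⟩))
  · exact Or.inr (Or.inr (Or.inr (Or.inl ⟨φ z, tin z h1, h2.imp (toutEq x z) (toutEq y z)⟩)))
  · refine Or.inr (Or.inr (Or.inr (Or.inr ⟨φ z₁, φ z₂, fun hc => hne (hφ hc),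
      fun hc => hx1 (hφ hc), fun hc => hy1 (hφ hc), fun hc => hx2 (hφ hc),
      fun hc => hy2 (hφ hc), toutEq x z₁ e1, tinEq x z₂ e2, tinEq z₁ y e3, toutEq z₂ y e4⟩)))

/-- Core of the diagonal case: if the four closed neighborhoods of `x, y, z, z'` factor as
the indicated products, then the arc `xy` is dispensable. -/
lemma diagonal_core {V₁ V₂ : Type*} (F : V₁ × V₂ → V₁ × V₂ → Prop)
    (x y z z' : V₁ × V₂) (A B : Set V₁) (C D : Set V₂) (A' B' : Set V₁) (C' D' : Set V₂)
    (hox : Nout F x = A ×ˢ C) (hoy : Nout F y = B ×ˢ D)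
    (hoz : Nout F z = B ×ˢ C) (hoz' : Nout F z' = A ×ˢ D)
    (hix : Nin F x = A' ×ˢ C') (hiy : Nin F y = B' ×ˢ D')
    (hiz : Nin F z = B' ×ˢ C') (hiz' : Nin F z' = A' ×ˢ D')
    (hABne : (A ∩ B).Nonempty) (hCDne : (C ∩ D).Nonempty)
    (hA'B'ne : (A' ∩ B').Nonempty) (hC'D'ne : (C' ∩ D').Nonempty)
    (hthin1 : A = B → A' ≠ B') (hthin2 : C = D → C' ≠ D')
    (hzz' : z ≠ z') (hzx : z ≠ x) (hzy : z ≠ y) (hz'x : z' ≠ x) (hz'y : z' ≠ y) :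
    Dispensable F x y := by
  have oz : NCondS (A ×ˢ C) (B ×ˢ D) (B ×ˢ C) → NCond (Nout F) x y z := fun h => by
    rw [NCond_iff, hox, hoy, hoz]; exact h
  have oz' : NCondS (A ×ˢ C) (B ×ˢ D) (A ×ˢ D) → NCond (Nout F) x y z' := fun h => by
    rw [NCond_iff, hox, hoy, hoz']; exact h
  have iz : NCondS (A' ×ˢ C') (B' ×ˢ D') (B' ×ˢ C') → NCond (Nin F) x y z := fun h => by
    rw [NCond_iff, hix, hiy, hiz]; exact h
  have iz' : NCondS (A' ×ˢ C') (B' ×ˢ D') (A' ×ˢ D') → NCond (Nin F) x y z' := fun h => by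
    rw [NCond_iff, hix, hiy, hiz']; exact h
  have oz3 : NCond3S (A ×ˢ C) (B ×ˢ D) (B ×ˢ C) → NCond3 (Nout F) x y z := fun h => by
    rw [NCond3_iff, hox, hoy, hoz]; exact h
  have oz3' : NCond3S (A ×ˢ C) (B ×ˢ D) (A ×ˢ D) → NCond3 (Nout F) x y z' := fun h => by
    rw [NCond3_iff, hox, hoy, hoz']; exact h
  have iz3 : NCond3S (A' ×ˢ C') (B' ×ˢ D') (B' ×ˢ C') → NCond3 (Nin F) x y z := fun h => by
    rw [NCond3_iff, hix, hiy, hiz]; exact h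
  have iz3' : NCond3S (A' ×ˢ C') (B' ×ˢ D') (A' ×ˢ D') → NCond3 (Nin F) x y z' := fun h => by
    rw [NCond3_iff, hix, hiy, hiz']; exact h
  have wiz : WeakNCond (Nin F) x y z := by rw [WeakNCond_iff, hix, hiy, hiz]; exact weak_z
  have wiz' : WeakNCond (Nin F) x y z' := by rw [WeakNCond_iff, hix, hiy, hiz']; exact weak_z'
  have woz : WeakNCond (Nout F) x y z := by rw [WeakNCond_iff, hox, hoy, hoz]; exact weak_z
  have woz' : WeakNCond (Nout F) x y z' := by rw [WeakNCond_iff, hox, hoy, hoz']; exact weak_z'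
  by_cases hA : A = B
  · by_cases hC' : C' = D'
    · -- D5 with z₁ = z, z₂ = z'
      refine Or.inr (Or.inr (Or.inr (Or.inr ⟨z, z', hzz', hzx, hzy, hz'x, hz'y,
        ?_, ?_, ?_, ?_⟩)))
      · rw [hox, hoz, hA]
      · rw [hix, hiz', hC']
      · rw [hiz, hiy, hC']
      · rw [hoz', hoy, hA]
    · -- D4
      have hA' : A' ≠ B' := hthin1 hA
      rcases keyOr hA'B'ne hC'D'ne hA' hC' with hk | hk
      · exact Or.inr (Or.inr (Or.inr (Or.inl ⟨z, iz hk, Or.inl (by rw [hox, hoz, hA])⟩)))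
      · exact Or.inr (Or.inr (Or.inr (Or.inl ⟨z', iz' hk, Or.inr (by rw [hoy, hoz', hA])⟩)))
  · by_cases hC : C = D
    · by_cases hA' : A' = B'
      · -- D5 with z₁ = z', z₂ = z
        have hz'z : z' ≠ z := fun h => hzz' h.symm
        refine Or.inr (Or.inr (Or.inr (Or.inr ⟨z', z, hz'z, hz'x, hz'y, hzx, hzy,
          ?_, ?_, ?_, ?_⟩)))
        · rw [hox, hoz', hC]
        · rw [hix, hiz, hA']
        · rw [hiz', hiy, hA']
        · rw [hoz, hoy, hC]
      · -- D4
        have hC'2 : C' ≠ D' := hthin2 hC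
        rcases keyOr hA'B'ne hC'D'ne hA' hC'2 with hk | hk
        · exact Or.inr (Or.inr (Or.inr (Or.inl ⟨z, iz hk, Or.inr (by rw [hoy, hoz, hC])⟩)))
        · exact Or.inr (Or.inr (Or.inr (Or.inl ⟨z', iz' hk, Or.inl (by rw [hox, hoz', hC])⟩)))
    · by_cases hA' : A' = B'
      · -- D3
        rcases keyOr hABne hCDne hA hC with hk | hk
        · exact Or.inr (Or.inr (Or.inl ⟨z, oz hk, Or.inl (by rw [hix, hiz, hA'])⟩))
        · exact Or.inr (Or.inr (Or.inl ⟨z', oz' hk, Or.inr (by rw [hiy, hiz', hA'])⟩))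
      · by_cases hC' : C' = D'
        · -- D3
          rcases keyOr hABne hCDne hA hC with hk | hk
          · exact Or.inr (Or.inr (Or.inl ⟨z, oz hk, Or.inr (by rw [hiy, hiz, hC'])⟩))
          · exact Or.inr (Or.inr (Or.inl ⟨z', oz' hk, Or.inl (by rw [hix, hiz', hC'])⟩))
        · -- general case: D1 or D2
          rcases key hABne hCDne hA hC with ⟨ho1, ho2⟩ | ho3 | ho3 <;>
            rcases key hA'B'ne hC'D'ne hA' hC' with ⟨hi1, hi2⟩ | hi3 | hi3
          · exact Or.inl ⟨z, oz ho1, iz hi1⟩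
          · exact Or.inl ⟨z, oz ho1, iz (Or.inr (Or.inr hi3))⟩
          · exact Or.inl ⟨z', oz' ho2, iz' (Or.inr (Or.inr hi3))⟩
          · exact Or.inl ⟨z, oz (Or.inr (Or.inr ho3)), iz hi1⟩
          · exact Or.inl ⟨z, oz (Or.inr (Or.inr ho3)), iz (Or.inr (Or.inr hi3))⟩
          · exact Or.inr (Or.inl ⟨z, z', ⟨oz3 ho3, wiz⟩, ⟨iz3' hi3, woz'⟩⟩)
          · exact Or.inl ⟨z', oz' (Or.inr (Or.inr ho3)), iz' hi2⟩
          · exact Or.inr (Or.inl ⟨z', z, ⟨oz3' ho3, wiz'⟩, ⟨iz3 hi3, woz⟩⟩)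
          · exact Or.inl ⟨z', oz' (Or.inr (Or.inr ho3)), iz' (Or.inr (Or.inr hi3))⟩

lemma prod_subset_iff_left {α β : Type*} {K : Set β} (hK : K.Nonempty) (S T : Set α) :
    S ⊆ T ↔ S ×ˢ K ⊆ T ×ˢ K :=
  ⟨fun h => Set.prod_mono h subset_rfl,
   fun h a ha => (h (Set.mk_mem_prod ha hK.choose_spec)).1⟩

lemma prod_subset_iff_right {α β : Type*} {K : Set α} (hK : K.Nonempty) (S T : Set β) :
    S ⊆ T ↔ K ×ˢ S ⊆ K ×ˢ T :=
  ⟨fun h => Set.prod_mono subset_rfl h,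
   fun h a ha => (h (Set.mk_mem_prod hK.choose_spec ha)).2⟩

lemma prod_inter_left {α β : Type*} (K : Set β) (S T : Set α) :
    (S ∩ T) ×ˢ K = S ×ˢ K ∩ T ×ˢ K := by
  rw [Set.prod_inter_prod, Set.inter_self]

lemma prod_inter_right {α β : Type*} (K : Set α) (S T : Set β) :
    K ×ˢ (S ∩ T) = K ×ˢ S ∩ K ×ˢ T := by
  rw [Set.prod_inter_prod, Set.inter_self]

lemma lift_fst {V₁ V₂ : Type*} (E₁ : V₁ → V₁ → Prop) (E₂ : V₂ → V₂ → Prop) (c : V₂)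
    {x₁ y₁ : V₁} (h : Dispensable E₁ x₁ y₁) :
    Dispensable (StrongAdj E₁ E₂) (x₁, c) (y₁, c) := by
  have hKo : (Nout E₂ c).Nonempty := ⟨c, Set.mem_insert _ _⟩
  have hKi : (Nin E₂ c).Nonempty := ⟨c, Set.mem_insert _ _⟩
  exact dispensable_transfer E₁ (StrongAdj E₁ E₂) (fun u => (u, c))
    (fun S => S ×ˢ Nout E₂ c) (fun S => S ×ˢ Nin E₂ c)
    (fun S T => prod_subset_iff_left hKo S T) (fun S T => prod_subset_iff_left hKi S T)
    (fun S T => prod_inter_left _ S T) (fun S T => prod_inter_left _ S T)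
    (fun u => Nout_strong E₁ E₂ (u, c)) (fun u => Nin_strong E₁ E₂ (u, c))
    (fun a b hab => congrArg Prod.fst hab) h

lemma lift_snd {V₁ V₂ : Type*} (E₁ : V₁ → V₁ → Prop) (E₂ : V₂ → V₂ → Prop) (c : V₁)
    {x₂ y₂ : V₂} (h : Dispensable E₂ x₂ y₂) :
    Dispensable (StrongAdj E₁ E₂) (c, x₂) (c, y₂) := by
  have hKo : (Nout E₁ c).Nonempty := ⟨c, Set.mem_insert _ _⟩
  have hKi : (Nin E₁ c).Nonempty := ⟨c, Set.mem_insert _ _⟩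
  exact dispensable_transfer E₂ (StrongAdj E₁ E₂) (fun u => (c, u))
    (fun S => Nout E₁ c ×ˢ S) (fun S => Nin E₁ c ×ˢ S)
    (fun S T => prod_subset_iff_right hKo S T) (fun S T => prod_subset_iff_right hKi S T)
    (fun S T => prod_inter_right _ S T) (fun S T => prod_inter_right _ S T)
    (fun u => Nout_strong E₁ E₂ (c, u)) (fun u => Nin_strong E₁ E₂ (c, u))
    (fun a b hab => congrArg Prod.snd hab) h

/-- Diagonal arcs of the strong product of thin digraphs are dispensable. -/
lemma diagonal_dispensable {V₁ V₂ : Type*} (E₁ : V₁ → V₁ → Prop) (E₂ : V₂ → V₂ → Prop)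
    (hirr₁ : Irreflexive E₁) (hirr₂ : Irreflexive E₂)
    (hthin₁ : Thin E₁) (hthin₂ : Thin E₂) {x₁ y₁ : V₁} {x₂ y₂ : V₂}
    (h₁ : E₁ x₁ y₁) (h₂ : E₂ x₂ y₂) :
    Dispensable (StrongAdj E₁ E₂) (x₁, x₂) (y₁, y₂) := by
  have hne₁ : x₁ ≠ y₁ := fun h => hirr₁ x₁ (h ▸ h₁)
  have hne₂ : x₂ ≠ y₂ := fun h => hirr₂ x₂ (h ▸ h₂)
  refine diagonal_core (StrongAdj E₁ E₂) (x₁, x₂) (y₁, y₂) (y₁, x₂) (x₁, y₂)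
    (Nout E₁ x₁) (Nout E₁ y₁) (Nout E₂ x₂) (Nout E₂ y₂)
    (Nin E₁ x₁) (Nin E₁ y₁) (Nin E₂ x₂) (Nin E₂ y₂)
    (Nout_strong E₁ E₂ _) (Nout_strong E₁ E₂ _) (Nout_strong E₁ E₂ _) (Nout_strong E₁ E₂ _)
    (Nin_strong E₁ E₂ _) (Nin_strong E₁ E₂ _) (Nin_strong E₁ E₂ _) (Nin_strong E₁ E₂ _)
    ⟨y₁, Set.mem_insert_iff.2 (Or.inr h₁), Set.mem_insert _ _⟩
    ⟨y₂, Set.mem_insert_iff.2 (Or.inr h₂), Set.mem_insert _ _⟩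
    ⟨x₁, Set.mem_insert _ _, Set.mem_insert_iff.2 (Or.inr h₁)⟩
    ⟨x₂, Set.mem_insert _ _, Set.mem_insert_iff.2 (Or.inr h₂)⟩
    (fun h h' => hne₁ (hthin₁ x₁ y₁ h h')) (fun h h' => hne₂ (hthin₂ x₂ y₂ h h'))
    (fun h => hne₁ (congrArg Prod.fst h).symm)
    (fun h => hne₁ (congrArg Prod.fst h).symm)
    (fun h => hne₂ (congrArg Prod.snd h))
    (fun h => hne₂ (congrArg Prod.snd h).symm)
    (fun h => hne₁ (congrArg Prod.fst h))

/-- If `H` and `K` are thin digraphs, then `𝕊(H ⊠ K) ⊆ 𝕊(H) □ 𝕊(K)`. -/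
theorem skeleton_strong_subset_cart_skeletons {V₁ V₂ : Type*}
    (E₁ : V₁ → V₁ → Prop) (E₂ : V₂ → V₂ → Prop)
    (hirr₁ : Irreflexive E₁) (hirr₂ : Irreflexive E₂)
    (hthin₁ : Thin E₁) (hthin₂ : Thin E₂) :
    ∀ x y : V₁ × V₂, SkelAdj (StrongAdj E₁ E₂) x y →
      CartAdj (SkelAdj E₁) (SkelAdj E₂) x y := by
  rintro ⟨a₁, a₂⟩ ⟨b₁, b₂⟩ ⟨hadj, hnd⟩
  rcases hadj with ⟨h₁, h₂⟩ | ⟨h₁, h₂⟩ | ⟨h₁, h₂⟩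
  · obtain rfl : a₂ = b₂ := h₂
    exact Or.inl ⟨⟨h₁, fun hd => hnd (lift_fst E₁ E₂ a₂ hd)⟩, rfl⟩
  · obtain rfl : a₁ = b₁ := h₁
    exact Or.inr ⟨rfl, h₂, fun hd => hnd (lift_snd E₁ E₂ a₁ hd)⟩
  · exact absurd (diagonal_dispensable E₁ E₂ hirr₁ hirr₂ hthin₁ hthin₂ h₁ h₂) hnd
end

section
/- If H and K are thin digraphs, then the Cartesian skeleton of their strong product equals the Cartesian product of their Cartesian skeletons: 𝕊(H ⊠ K) = 𝕊(H) □ 𝕊(K). -/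
section Toolkit
variable {V V₁ V₂ : Type*}

lemma mem_nout_self (E : V → V → Prop) (v : V) : v ∈ Nout E v := Set.mem_insert _ _
lemma mem_nin_self (E : V → V → Prop) (v : V) : v ∈ Nin E v := Set.mem_insert _ _
lemma mem_nout_of_adj {E : V → V → Prop} {u v : V} (h : E u v) : v ∈ Nout E u :=
  Set.mem_insert_iff.2 (Or.inr h)
lemma mem_nin_of_adj {E : V → V → Prop} {u v : V} (h : E u v) : u ∈ Nin E v :=
  Set.mem_insert_iff.2 (Or.inr h)

lemma prod_subset_iff' {A C : Set V₁} {B D : Set V₂} (hA : A.Nonempty) (hB : B.Nonempty) :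
    A ×ˢ B ⊆ C ×ˢ D ↔ A ⊆ C ∧ B ⊆ D := by
  constructor
  · intro h
    obtain ⟨a, ha⟩ := hA; obtain ⟨b, hb⟩ := hB
    exact ⟨fun x hx => (h (Set.mk_mem_prod hx hb)).1, fun y hy => (h (Set.mk_mem_prod ha hy)).2⟩
  · rintro ⟨h1, h2⟩; exact Set.prod_mono h1 h2

lemma prod_eq_iff' {A C : Set V₁} {B D : Set V₂} (hA : A.Nonempty) (hB : B.Nonempty) :
    A ×ˢ B = C ×ˢ D ↔ A = C ∧ B = D := by
  constructor
  · intro h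
    have hCD : (C ×ˢ D).Nonempty := h ▸ Set.prod_nonempty_iff.2 ⟨hA, hB⟩
    obtain ⟨hC, hD⟩ := Set.prod_nonempty_iff.1 hCD
    have h1 := (prod_subset_iff' hA hB).1 h.subset
    have h2 := (prod_subset_iff' hC hD).1 h.symm.subset
    exact ⟨h1.1.antisymm h2.1, h1.2.antisymm h2.2⟩
  · rintro ⟨h1, h2⟩; rw [h1, h2]

lemma prod_ssubset_iff' {A C : Set V₁} {B D : Set V₂} (hA : A.Nonempty) (hB : B.Nonempty) :
    A ×ˢ B ⊂ C ×ˢ D ↔ (A ⊆ C ∧ B ⊆ D) ∧ ¬(A = C ∧ B = D) := by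
  rw [ssubset_iff_subset_ne, prod_subset_iff' hA hB, Ne, prod_eq_iff' hA hB]

lemma prod_ssubset_left {A C : Set V₁} {B : Set V₂} (hB : B.Nonempty) (h : A ⊂ C) :
    A ×ˢ B ⊂ C ×ˢ B := by
  obtain ⟨b, hb⟩ := hB
  rw [Set.ssubset_def]
  refine ⟨Set.prod_mono h.subset le_rfl, fun hle => ?_⟩
  obtain ⟨w, hwC, hwA⟩ := Set.exists_of_ssubset h
  exact hwA (hle (Set.mk_mem_prod hwC hb)).1

lemma prod_ssubset_right {A : Set V₁} {B D : Set V₂} (hA : A.Nonempty) (h : B ⊂ D) :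
    A ×ˢ B ⊂ A ×ˢ D := by
  obtain ⟨a, ha⟩ := hA
  rw [Set.ssubset_def]
  refine ⟨Set.prod_mono le_rfl h.subset, fun hle => ?_⟩
  obtain ⟨w, hwD, hwB⟩ := Set.exists_of_ssubset h
  exact hwB (hle (Set.mk_mem_prod ha hwD)).2

lemma inter_ssubset_left' {s t : Set V} (h : ¬ s ⊆ t) : s ∩ t ⊂ s :=
  ssubset_iff_subset_ne.2 ⟨Set.inter_subset_left, fun he => h (he ▸ Set.inter_subset_right)⟩

lemma inter_ssubset_right' {s t : Set V} (h : ¬ t ⊆ s) : s ∩ t ⊂ t :=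
  ssubset_iff_subset_ne.2 ⟨Set.inter_subset_right, fun he => h (he ▸ Set.inter_subset_left)⟩

lemma nout_strong (E₁ : V₁ → V₁ → Prop) (E₂ : V₂ → V₂ → Prop) (p : V₁ × V₂) :
    Nout (StrongAdj E₁ E₂) p = Nout E₁ p.1 ×ˢ Nout E₂ p.2 := by
  ext q
  simp only [Nout, StrongAdj, Set.mem_insert_iff, Set.mem_setOf_eq, Set.mem_prod, Prod.ext_iff]
  tauto

lemma nin_strong (E₁ : V₁ → V₁ → Prop) (E₂ : V₂ → V₂ → Prop) (p : V₁ × V₂) :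
    Nin (StrongAdj E₁ E₂) p = Nin E₁ p.1 ×ˢ Nin E₂ p.2 := by
  ext q
  simp only [Nin, StrongAdj, Set.mem_insert_iff, Set.mem_setOf_eq, Set.mem_prod, Prod.ext_iff]
  tauto

end Toolkit

section Fam
variable {V₁ V₂ : Type*} {F₁ : V₁ → Set V₁} {F₂ : V₂ → Set V₂}
  {P : V₁ × V₂ → Set (V₁ × V₂)}

/-! ### Lifting conditions from the first factor (horizontal arcs) -/

lemma ncond3_lift (hP : ∀ p, P p = F₁ p.1 ×ˢ F₂ p.2) {a c u : V₁} {b : V₂}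
    (hb : (F₂ b).Nonempty) (h : NCond3 F₁ a c u) : NCond3 P (a, b) (c, b) (u, b) := by
  simp only [NCond3, hP, Set.prod_inter_prod, Set.inter_self]
  exact ⟨prod_ssubset_left hb h.1, prod_ssubset_left hb h.2⟩

lemma ncond_lift (hP : ∀ p, P p = F₁ p.1 ×ˢ F₂ p.2) {a c u : V₁} {b : V₂}
    (hb : (F₂ b).Nonempty) (h : NCond F₁ a c u) : NCond P (a, b) (c, b) (u, b) := by
  rcases h with ⟨h1, h2⟩ | ⟨h1, h2⟩ | h3
  · exact Or.inl (by
      simp only [hP]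
      exact ⟨prod_ssubset_left hb h1, prod_ssubset_left hb h2⟩)
  · exact Or.inr (Or.inl (by
      simp only [hP]
      exact ⟨prod_ssubset_left hb h1, prod_ssubset_left hb h2⟩))
  · exact Or.inr (Or.inr (ncond3_lift hP hb h3))

lemma weak_lift (hP : ∀ p, P p = F₁ p.1 ×ˢ F₂ p.2) {a c u : V₁} {b : V₂}
    (h : WeakNCond F₁ a c u) : WeakNCond P (a, b) (c, b) (u, b) := by
  simp only [WeakNCond, hP, Set.prod_inter_prod, Set.inter_self]
  exact ⟨Set.prod_mono h.1 le_rfl, Set.prod_mono h.2 le_rfl⟩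

/-! ### Projecting conditions to the first factor (horizontal arcs) -/

lemma ncond3_proj (hP : ∀ p, P p = F₁ p.1 ×ˢ F₂ p.2) {a c u : V₁} {b v : V₂}
    (hac : (F₁ a ∩ F₁ c).Nonempty) (hb : (F₂ b).Nonempty)
    (h : NCond3 P (a, b) (c, b) (u, v)) : NCond3 F₁ a c u := by
  simp only [NCond3, hP, Set.prod_inter_prod, Set.inter_self] at h
  obtain ⟨h1, h2⟩ := h
  obtain ⟨⟨h11, h12⟩, hne1⟩ := (prod_ssubset_iff' hac hb).1 h1
  obtain ⟨⟨h21, h22⟩, hne2⟩ := (prod_ssubset_iff' hac hb).1 h2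
  have hBV : F₂ b ∩ F₂ v = F₂ b := Set.inter_subset_left.antisymm h12
  constructor
  · exact ssubset_iff_subset_ne.2 ⟨h11, fun he => hne1 ⟨he, hBV.symm⟩⟩
  · exact ssubset_iff_subset_ne.2 ⟨h21, fun he => hne2 ⟨he, hBV.symm⟩⟩

lemma ncond_proj (hP : ∀ p, P p = F₁ p.1 ×ˢ F₂ p.2) {a c u : V₁} {b v : V₂}
    (hac : (F₁ a ∩ F₁ c).Nonempty) (hb : (F₂ b).Nonempty)
    (h : NCond P (a, b) (c, b) (u, v)) : NCond F₁ a c u := by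
  have ha : (F₁ a).Nonempty := hac.mono Set.inter_subset_left
  have hc : (F₁ c).Nonempty := hac.mono Set.inter_subset_right
  rcases h with ⟨h1, h2⟩ | ⟨h1, h2⟩ | h3
  · simp only [hP] at h1 h2
    obtain ⟨⟨hAU, hBV⟩, hne1⟩ := (prod_ssubset_iff' ha hb).1 h1
    have hU : (F₁ u).Nonempty := ha.mono hAU
    have hV : (F₂ v).Nonempty := hb.mono hBV
    obtain ⟨⟨hUC, hVB⟩, hne2⟩ := (prod_ssubset_iff' hU hV).1 h2
    have hBV' : F₂ b = F₂ v := hBV.antisymm hVB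
    exact Or.inl ⟨ssubset_iff_subset_ne.2 ⟨hAU, fun he => hne1 ⟨he, hBV'⟩⟩,
      ssubset_iff_subset_ne.2 ⟨hUC, fun he => hne2 ⟨he, hBV'.symm⟩⟩⟩
  · simp only [hP] at h1 h2
    obtain ⟨⟨hCU, hBV⟩, hne1⟩ := (prod_ssubset_iff' hc hb).1 h1
    have hU : (F₁ u).Nonempty := hc.mono hCU
    have hV : (F₂ v).Nonempty := hb.mono hBV
    obtain ⟨⟨hUA, hVB⟩, hne2⟩ := (prod_ssubset_iff' hU hV).1 h2
    have hBV' : F₂ b = F₂ v := hBV.antisymm hVB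
    exact Or.inr (Or.inl ⟨ssubset_iff_subset_ne.2 ⟨hCU, fun he => hne1 ⟨he, hBV'⟩⟩,
      ssubset_iff_subset_ne.2 ⟨hUA, fun he => hne2 ⟨he, hBV'.symm⟩⟩⟩)
  · exact Or.inr (Or.inr (ncond3_proj hP hac hb h3))

lemma weak_proj (hP : ∀ p, P p = F₁ p.1 ×ˢ F₂ p.2) {a c u : V₁} {b v : V₂}
    (hac : (F₁ a ∩ F₁ c).Nonempty) (hb : (F₂ b).Nonempty)
    (h : WeakNCond P (a, b) (c, b) (u, v)) : WeakNCond F₁ a c u := by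
  simp only [WeakNCond, hP, Set.prod_inter_prod, Set.inter_self] at h
  exact ⟨((prod_subset_iff' hac hb).1 h.1).1, ((prod_subset_iff' hac hb).1 h.2).1⟩

lemma eq_proj (hP : ∀ p, P p = F₁ p.1 ×ˢ F₂ p.2) {a u : V₁} {b v : V₂}
    (ha : (F₁ a).Nonempty) (hb : (F₂ b).Nonempty)
    (h : P (a, b) = P (u, v)) : F₁ a = F₁ u ∧ F₂ b = F₂ v := by
  simp only [hP] at h
  exact (prod_eq_iff' ha hb).1 h

end Fam


section Diag
variable {V₁ V₂ : Type*} {F₁ : V₁ → Set V₁} {F₂ : V₂ → Set V₂}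
  {P : V₁ × V₂ → Set (V₁ × V₂)} {a c : V₁} {b d : V₂}

lemma ncond3_ad (hP : ∀ p, P p = F₁ p.1 ×ˢ F₂ p.2)
    (hac : (F₁ a ∩ F₁ c).Nonempty) (hbd : (F₂ b ∩ F₂ d).Nonempty)
    (h1 : ¬ F₁ a ⊆ F₁ c) (h2 : ¬ F₂ d ⊆ F₂ b) : NCond3 P (a, b) (c, d) (a, d) := by
  simp only [NCond3, hP, Set.prod_inter_prod, Set.inter_self]
  constructor
  · exact prod_ssubset_left hbd (inter_ssubset_left' h1)
  · rw [Set.inter_comm (F₁ c) (F₁ a)]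
    exact prod_ssubset_right hac (inter_ssubset_right' h2)

lemma ncond3_cb (hP : ∀ p, P p = F₁ p.1 ×ˢ F₂ p.2)
    (hac : (F₁ a ∩ F₁ c).Nonempty) (hbd : (F₂ b ∩ F₂ d).Nonempty)
    (h1 : ¬ F₁ c ⊆ F₁ a) (h2 : ¬ F₂ b ⊆ F₂ d) : NCond3 P (a, b) (c, d) (c, b) := by
  simp only [NCond3, hP, Set.prod_inter_prod, Set.inter_self]
  constructor
  · exact prod_ssubset_right hac (inter_ssubset_left' h2)
  · rw [Set.inter_comm (F₂ d) (F₂ b)]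
    exact prod_ssubset_left hbd (inter_ssubset_right' h1)

lemma weak_ad (hP : ∀ p, P p = F₁ p.1 ×ˢ F₂ p.2) : WeakNCond P (a, b) (c, d) (a, d) := by
  simp only [WeakNCond, hP, Set.prod_inter_prod, Set.inter_self]
  exact ⟨Set.prod_mono Set.inter_subset_left le_rfl,
    Set.prod_mono (Set.inter_comm (F₁ a) (F₁ c)).subset Set.inter_subset_right⟩

lemma weak_cb (hP : ∀ p, P p = F₁ p.1 ×ˢ F₂ p.2) : WeakNCond P (a, b) (c, d) (c, b) := by
  simp only [WeakNCond, hP, Set.prod_inter_prod, Set.inter_self]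
  exact ⟨Set.prod_mono le_rfl Set.inter_subset_left,
    Set.prod_mono Set.inter_subset_right (Set.inter_comm (F₂ b) (F₂ d)).subset⟩

lemma key_s10 (hP : ∀ p, P p = F₁ p.1 ×ˢ F₂ p.2)
    (hac : (F₁ a ∩ F₁ c).Nonempty) (hbd : (F₂ b ∩ F₂ d).Nonempty)
    (h1 : F₁ a ≠ F₁ c) (h2 : F₂ b ≠ F₂ d) :
    (NCond P (a, b) (c, d) (a, d) ∧ NCond P (a, b) (c, d) (c, b)) ∨
      NCond3 P (a, b) (c, d) (a, d) ∨ NCond3 P (a, b) (c, d) (c, b) := by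
  have ha : (F₁ a).Nonempty := hac.mono Set.inter_subset_left
  have hc : (F₁ c).Nonempty := hac.mono Set.inter_subset_right
  have hb : (F₂ b).Nonempty := hbd.mono Set.inter_subset_left
  have hd : (F₂ d).Nonempty := hbd.mono Set.inter_subset_right
  by_cases hp : F₁ a ⊆ F₁ c
  · by_cases hr : F₂ b ⊆ F₂ d
    · have hAC : F₁ a ⊂ F₁ c := ssubset_iff_subset_ne.2 ⟨hp, h1⟩
      have hBD : F₂ b ⊂ F₂ d := ssubset_iff_subset_ne.2 ⟨hr, h2⟩
      refine Or.inl ⟨Or.inl ⟨?_, ?_⟩, Or.inl ⟨?_, ?_⟩⟩ <;> simp only [hP]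
      · exact prod_ssubset_right ha hBD
      · exact prod_ssubset_left hd hAC
      · exact prod_ssubset_left hb hAC
      · exact prod_ssubset_right hc hBD
    · exact Or.inr (Or.inr (ncond3_cb hP hac hbd
        (fun hq => h1 (hp.antisymm hq)) hr))
  · by_cases hs : F₂ d ⊆ F₂ b
    · by_cases hq : F₁ c ⊆ F₁ a
      · have hCA : F₁ c ⊂ F₁ a := ssubset_iff_subset_ne.2 ⟨hq, h1.symm⟩
        have hDB : F₂ d ⊂ F₂ b := ssubset_iff_subset_ne.2 ⟨hs, h2.symm⟩
        refine Or.inl ⟨Or.inr (Or.inl ⟨?_, ?_⟩), Or.inr (Or.inl ⟨?_, ?_⟩)⟩ <;> simp only [hP]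
        · exact prod_ssubset_left hd hCA
        · exact prod_ssubset_right ha hDB
        · exact prod_ssubset_right hc hDB
        · exact prod_ssubset_left hb hCA
      · exact Or.inr (Or.inr (ncond3_cb hP hac hbd hq (fun hr => h2 (hr.antisymm hs))))
    · exact Or.inr (Or.inl (ncond3_ad hP hac hbd hp hs))

end Diag


section DiagDisp
variable {V₁ V₂ : Type*} {E₁ : V₁ → V₁ → Prop} {E₂ : V₂ → V₂ → Prop}

lemma diag_disp (hthin₁ : Thin E₁) (hthin₂ : Thin E₂) {a c : V₁} {b d : V₂}
    (hac : E₁ a c) (hbd : E₂ b d) (hne1 : a ≠ c) (hne2 : b ≠ d) :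
    Dispensable (StrongAdj E₁ E₂) (a, b) (c, d) := by
  have hPo := nout_strong E₁ E₂
  have hPi := nin_strong E₁ E₂
  have hACo : (Nout E₁ a ∩ Nout E₁ c).Nonempty := ⟨c, mem_nout_of_adj hac, mem_nout_self _ _⟩
  have hBDo : (Nout E₂ b ∩ Nout E₂ d).Nonempty := ⟨d, mem_nout_of_adj hbd, mem_nout_self _ _⟩
  have hACi : (Nin E₁ a ∩ Nin E₁ c).Nonempty := ⟨a, mem_nin_self _ _, mem_nin_of_adj hac⟩
  have hBDi : (Nin E₂ b ∩ Nin E₂ d).Nonempty := ⟨b, mem_nin_self _ _, mem_nin_of_adj hbd⟩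
  by_cases hA : Nout E₁ a = Nout E₁ c
  · have hA' : Nin E₁ a ≠ Nin E₁ c := fun h => hne1 (hthin₁ a c hA h)
    by_cases hB' : Nin E₂ b = Nin E₂ d
    · refine Or.inr (Or.inr (Or.inr (Or.inr ⟨(c, b), (a, d), ?_, ?_, ?_, ?_, ?_, ?_, ?_, ?_, ?_⟩)))
      · simp only [ne_eq, Prod.mk.injEq, not_and]
        exact fun h _ => absurd h.symm hne1
      · simp only [ne_eq, Prod.mk.injEq, not_and]
        exact fun h _ => absurd h.symm hne1
      · simp only [ne_eq, Prod.mk.injEq, not_and]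
        exact fun _ => hne2
      · simp only [ne_eq, Prod.mk.injEq, not_and]
        exact fun _ => hne2.symm
      · simp only [ne_eq, Prod.mk.injEq, not_and]
        exact fun h _ => absurd h hne1
      · simp only [hPo]; rw [hA]
      · simp only [hPi]; rw [hB']
      · simp only [hPi]; rw [hB']
      · simp only [hPo]; rw [hA]
    · refine Or.inr (Or.inr (Or.inr (Or.inl ?_)))
      rcases key_s10 hPi hACi hBDi hA' hB' with ⟨h1, _⟩ | h3 | h3
      · exact ⟨(a, d), h1, Or.inr (by simp only [hPo]; rw [hA])⟩
      · exact ⟨(a, d), Or.inr (Or.inr h3), Or.inr (by simp only [hPo]; rw [hA])⟩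
      · exact ⟨(c, b), Or.inr (Or.inr h3), Or.inl (by simp only [hPo]; rw [hA])⟩
  · by_cases hB : Nout E₂ b = Nout E₂ d
    · have hB' : Nin E₂ b ≠ Nin E₂ d := fun h => hne2 (hthin₂ b d hB h)
      by_cases hA' : Nin E₁ a = Nin E₁ c
      · refine Or.inr (Or.inr (Or.inr (Or.inr ⟨(a, d), (c, b), ?_, ?_, ?_, ?_, ?_, ?_, ?_, ?_, ?_⟩)))
        · simp only [ne_eq, Prod.mk.injEq, not_and]
          exact fun h _ => absurd h hne1
        · simp only [ne_eq, Prod.mk.injEq, not_and]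
          exact fun _ => hne2.symm
        · simp only [ne_eq, Prod.mk.injEq, not_and]
          exact fun h _ => absurd h hne1
        · simp only [ne_eq, Prod.mk.injEq, not_and]
          exact fun h _ => absurd h.symm hne1
        · simp only [ne_eq, Prod.mk.injEq, not_and]
          exact fun _ => hne2
        · simp only [hPo]; rw [hB]
        · simp only [hPi]; rw [hA']
        · simp only [hPi]; rw [hA']
        · simp only [hPo]; rw [hB]
      · refine Or.inr (Or.inr (Or.inr (Or.inl ?_)))
        rcases key_s10 hPi hACi hBDi hA' hB' with ⟨h1, _⟩ | h3 | h3
        · exact ⟨(a, d), h1, Or.inl (by simp only [hPo]; rw [hB])⟩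
        · exact ⟨(a, d), Or.inr (Or.inr h3), Or.inl (by simp only [hPo]; rw [hB])⟩
        · exact ⟨(c, b), Or.inr (Or.inr h3), Or.inr (by simp only [hPo]; rw [hB])⟩
    · by_cases hA' : Nin E₁ a = Nin E₁ c
      · refine Or.inr (Or.inr (Or.inl ?_))
        rcases key_s10 hPo hACo hBDo hA hB with ⟨h1, _⟩ | h3 | h3
        · exact ⟨(a, d), h1, Or.inr (by simp only [hPi]; rw [hA'])⟩
        · exact ⟨(a, d), Or.inr (Or.inr h3), Or.inr (by simp only [hPi]; rw [hA'])⟩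
        · exact ⟨(c, b), Or.inr (Or.inr h3), Or.inl (by simp only [hPi]; rw [hA'])⟩
      · by_cases hB' : Nin E₂ b = Nin E₂ d
        · refine Or.inr (Or.inr (Or.inl ?_))
          rcases key_s10 hPo hACo hBDo hA hB with ⟨h1, _⟩ | h3 | h3
          · exact ⟨(a, d), h1, Or.inl (by simp only [hPi]; rw [hB'])⟩
          · exact ⟨(a, d), Or.inr (Or.inr h3), Or.inl (by simp only [hPi]; rw [hB'])⟩
          · exact ⟨(c, b), Or.inr (Or.inr h3), Or.inr (by simp only [hPi]; rw [hB'])⟩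
        · rcases key_s10 hPo hACo hBDo hA hB with ⟨ho1, ho2⟩ | ho3 | ho3
          · rcases key_s10 hPi hACi hBDi hA' hB' with ⟨hi1, _⟩ | hi3 | hi3
            · exact Or.inl ⟨(a, d), ho1, hi1⟩
            · exact Or.inl ⟨(a, d), ho1, Or.inr (Or.inr hi3)⟩
            · exact Or.inl ⟨(c, b), ho2, Or.inr (Or.inr hi3)⟩
          · rcases key_s10 hPi hACi hBDi hA' hB' with ⟨hi1, _⟩ | hi3 | hi3
            · exact Or.inl ⟨(a, d), Or.inr (Or.inr ho3), hi1⟩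
            · exact Or.inl ⟨(a, d), Or.inr (Or.inr ho3), Or.inr (Or.inr hi3)⟩
            · exact Or.inr (Or.inl ⟨(a, d), (c, b), ⟨ho3, weak_ad hPi⟩, ⟨hi3, weak_cb hPo⟩⟩)
          · rcases key_s10 hPi hACi hBDi hA' hB' with ⟨_, hi2⟩ | hi3 | hi3
            · exact Or.inl ⟨(c, b), Or.inr (Or.inr ho3), hi2⟩
            · exact Or.inr (Or.inl ⟨(c, b), (a, d), ⟨ho3, weak_cb hPi⟩, ⟨hi3, weak_ad hPo⟩⟩)
            · exact Or.inl ⟨(c, b), Or.inr (Or.inr ho3), Or.inr (Or.inr hi3)⟩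

end DiagDisp


section LiftProj
variable {V₁ V₂ : Type*} {E₁ : V₁ → V₁ → Prop} {E₂ : V₂ → V₂ → Prop}

lemma lift_disp (E₂ : V₂ → V₂ → Prop) {a c : V₁} (b : V₂) (h : Dispensable E₁ a c) :
    Dispensable (StrongAdj E₁ E₂) (a, b) (c, b) := by
  have hPo := nout_strong E₁ E₂
  have hPi := nin_strong E₁ E₂
  have hbo : (Nout E₂ b).Nonempty := ⟨b, mem_nout_self _ _⟩
  have hbi : (Nin E₂ b).Nonempty := ⟨b, mem_nin_self _ _⟩
  rcases h with ⟨z, h1, h2⟩ | ⟨z₁, z₂, ⟨h1, h2⟩, h3, h4⟩ | ⟨z, h1, h2⟩ | ⟨z, h1, h2⟩ |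
    ⟨z₁, z₂, hne, hx1, hy1, hx2, hy2, e1, e2, e3, e4⟩
  · exact Or.inl ⟨(z, b), ncond_lift hPo hbo h1, ncond_lift hPi hbi h2⟩
  · exact Or.inr (Or.inl ⟨(z₁, b), (z₂, b), ⟨ncond3_lift hPo hbo h1, weak_lift hPi h2⟩,
      ncond3_lift hPi hbi h3, weak_lift hPo h4⟩)
  · refine Or.inr (Or.inr (Or.inl ⟨(z, b), ncond_lift hPo hbo h1, ?_⟩))
    rcases h2 with h2 | h2
    · exact Or.inl (by simp only [hPi]; rw [h2])
    · exact Or.inr (by simp only [hPi]; rw [h2])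
  · refine Or.inr (Or.inr (Or.inr (Or.inl ⟨(z, b), ncond_lift hPi hbi h1, ?_⟩)))
    rcases h2 with h2 | h2
    · exact Or.inl (by simp only [hPo]; rw [h2])
    · exact Or.inr (by simp only [hPo]; rw [h2])
  · refine Or.inr (Or.inr (Or.inr (Or.inr ⟨(z₁, b), (z₂, b), ?_, ?_, ?_, ?_, ?_, ?_, ?_, ?_, ?_⟩)))
    · simp only [ne_eq, Prod.mk.injEq, not_and]
      exact fun h _ => absurd h hne
    · simp only [ne_eq, Prod.mk.injEq, not_and]
      exact fun h _ => absurd h hx1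
    · simp only [ne_eq, Prod.mk.injEq, not_and]
      exact fun h _ => absurd h hy1
    · simp only [ne_eq, Prod.mk.injEq, not_and]
      exact fun h _ => absurd h hx2
    · simp only [ne_eq, Prod.mk.injEq, not_and]
      exact fun h _ => absurd h hy2
    · simp only [hPo]; rw [e1]
    · simp only [hPi]; rw [e2]
    · simp only [hPi]; rw [e3]
    · simp only [hPo]; rw [e4]

lemma proj_disp (hthin₂ : Thin E₂) {a c : V₁} {b : V₂} (hac : E₁ a c)
    (h : Dispensable (StrongAdj E₁ E₂) (a, b) (c, b)) : Dispensable E₁ a c := by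
  have hPo := nout_strong E₁ E₂
  have hPi := nin_strong E₁ E₂
  have hACo : (Nout E₁ a ∩ Nout E₁ c).Nonempty := ⟨c, mem_nout_of_adj hac, mem_nout_self _ _⟩
  have hACi : (Nin E₁ a ∩ Nin E₁ c).Nonempty := ⟨a, mem_nin_self _ _, mem_nin_of_adj hac⟩
  have hao : (Nout E₁ a).Nonempty := ⟨a, mem_nout_self _ _⟩
  have hai : (Nin E₁ a).Nonempty := ⟨a, mem_nin_self _ _⟩
  have hbo : (Nout E₂ b).Nonempty := ⟨b, mem_nout_self _ _⟩
  have hbi : (Nin E₂ b).Nonempty := ⟨b, mem_nin_self _ _⟩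
  rcases h with ⟨⟨u, v⟩, h1, h2⟩ | ⟨⟨u₁, v₁⟩, ⟨u₂, v₂⟩, ⟨h1, h2⟩, h3, h4⟩ | ⟨⟨u, v⟩, h1, h2⟩ |
    ⟨⟨u, v⟩, h1, h2⟩ | ⟨⟨u₁, v₁⟩, ⟨u₂, v₂⟩, hne, hx1, hy1, hx2, hy2, e1, e2, e3, e4⟩
  · exact Or.inl ⟨u, ncond_proj hPo hACo hbo h1, ncond_proj hPi hACi hbi h2⟩
  · exact Or.inr (Or.inl ⟨u₁, u₂, ⟨ncond3_proj hPo hACo hbo h1, weak_proj hPi hACi hbi h2⟩,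
      ncond3_proj hPi hACi hbi h3, weak_proj hPo hACo hbo h4⟩)
  · refine Or.inr (Or.inr (Or.inl ⟨u, ncond_proj hPo hACo hbo h1, ?_⟩))
    rcases h2 with h2 | h2
    · exact Or.inl (eq_proj hPi hai hbi h2).1
    · exact Or.inr (eq_proj hPi ⟨c, mem_nin_self _ _⟩ hbi h2).1
  · refine Or.inr (Or.inr (Or.inr (Or.inl ⟨u, ncond_proj hPi hACi hbi h1, ?_⟩)))
    rcases h2 with h2 | h2
    · exact Or.inl (eq_proj hPo hao hbo h2).1
    · exact Or.inr (eq_proj hPo ⟨c, mem_nout_self _ _⟩ hbo h2).1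
  · obtain ⟨f1, f1'⟩ := eq_proj hPo hao hbo e1
    obtain ⟨f2, f2'⟩ := eq_proj hPi hai hbi e2
    have hu1 : (Nin E₁ u₁).Nonempty := ⟨u₁, mem_nin_self _ _⟩
    have hv1 : (Nin E₂ v₁).Nonempty := ⟨v₁, mem_nin_self _ _⟩
    obtain ⟨f3, f3'⟩ := eq_proj hPi hu1 hv1 e3
    have hu2 : (Nout E₁ u₂).Nonempty := ⟨u₂, mem_nout_self _ _⟩
    have hv2 : (Nout E₂ v₂).Nonempty := ⟨v₂, mem_nout_self _ _⟩
    obtain ⟨f4, f4'⟩ := eq_proj hPo hu2 hv2 e4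
    have hv1b : v₁ = b := hthin₂ v₁ b f1'.symm f3'
    have hv2b : v₂ = b := hthin₂ v₂ b f4' f2'.symm
    subst hv1b; subst hv2b
    refine Or.inr (Or.inr (Or.inr (Or.inr ⟨u₁, u₂, ?_, ?_, ?_, ?_, ?_, f1, f2, f3, f4⟩)))
    · exact fun h => hne (by rw [h])
    · exact fun h => hx1 (by rw [h])
    · exact fun h => hy1 (by rw [h])
    · exact fun h => hx2 (by rw [h])
    · exact fun h => hy2 (by rw [h])

end LiftProj


section Transport
variable {V W : Type*} {E : V → V → Prop} {F : W → W → Prop}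

lemma nout_equiv (e : V ≃ W) (hEF : ∀ u v, E u v ↔ F (e u) (e v)) (v : V) :
    Nout F (e v) = e '' Nout E v := by
  ext w
  simp only [Nout, Set.mem_insert_iff, Set.mem_setOf_eq, Set.mem_image]
  constructor
  · rintro (rfl | h)
    · exact ⟨v, Or.inl rfl, rfl⟩
    · refine ⟨e.symm w, Or.inr ?_, e.apply_symm_apply w⟩
      rw [hEF]; rwa [e.apply_symm_apply]
  · rintro ⟨u, (rfl | h), rfl⟩
    · exact Or.inl rfl
    · exact Or.inr ((hEF v u).1 h)

lemma nin_equiv (e : V ≃ W) (hEF : ∀ u v, E u v ↔ F (e u) (e v)) (v : V) :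
    Nin F (e v) = e '' Nin E v := by
  ext w
  simp only [Nin, Set.mem_insert_iff, Set.mem_setOf_eq, Set.mem_image]
  constructor
  · rintro (rfl | h)
    · exact ⟨v, Or.inl rfl, rfl⟩
    · refine ⟨e.symm w, Or.inr ?_, e.apply_symm_apply w⟩
      rw [hEF]; rwa [e.apply_symm_apply]
  · rintro ⟨u, (rfl | h), rfl⟩
    · exact Or.inl rfl
    · exact Or.inr ((hEF u v).1 h)

lemma ncond_image (e : V ≃ W) {N : V → Set V} {M : W → Set W}
    (h : ∀ v, M (e v) = e '' N v) (x y z : V) :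
    (NCond M (e x) (e y) (e z) ↔ NCond N x y z) ∧
      (NCond3 M (e x) (e y) (e z) ↔ NCond3 N x y z) ∧
      (WeakNCond M (e x) (e y) (e z) ↔ WeakNCond N x y z) := by
  have hsub : ∀ s t : Set V, e '' s ⊆ e '' t ↔ s ⊆ t := fun s t =>
    Set.image_subset_image_iff e.injective
  have hss : ∀ s t : Set V, e '' s ⊂ e '' t ↔ s ⊂ t := fun s t => by
    rw [Set.ssubset_def, Set.ssubset_def, hsub, hsub]
  simp only [NCond, NCond3, WeakNCond, h, ← Set.image_inter e.injective, hss, hsub]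
  tauto

lemma eq_image (e : V ≃ W) {N : V → Set V} {M : W → Set W}
    (h : ∀ v, M (e v) = e '' N v) (u v : V) : N u = N v ↔ M (e u) = M (e v) := by
  rw [h, h, Set.image_eq_image e.injective]

lemma disp_map (e : V ≃ W) (hEF : ∀ u v, E u v ↔ F (e u) (e v)) {x y : V}
    (h : Dispensable E x y) : Dispensable F (e x) (e y) := by
  have ho := nout_equiv e hEF
  have hi := nin_equiv e hEF
  have hco := fun x y z => ncond_image e ho x y z
  have hci := fun x y z => ncond_image e hi x y z
  rcases h with ⟨z, h1, h2⟩ | ⟨z₁, z₂, ⟨h1, h2⟩, h3, h4⟩ | ⟨z, h1, h2⟩ | ⟨z, h1, h2⟩ |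
    ⟨z₁, z₂, hne, hx1, hy1, hx2, hy2, e1, e2, e3, e4⟩
  · exact Or.inl ⟨e z, (hco x y z).1.mpr h1, (hci x y z).1.mpr h2⟩
  · exact Or.inr (Or.inl ⟨e z₁, e z₂, ⟨(hco x y z₁).2.1.mpr h1, (hci x y z₁).2.2.mpr h2⟩,
      (hci x y z₂).2.1.mpr h3, (hco x y z₂).2.2.mpr h4⟩)
  · exact Or.inr (Or.inr (Or.inl ⟨e z, (hco x y z).1.mpr h1,
      h2.imp (eq_image e hi x z).1 (eq_image e hi y z).1⟩))
  · exact Or.inr (Or.inr (Or.inr (Or.inl ⟨e z, (hci x y z).1.mpr h1,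
      h2.imp (eq_image e ho x z).1 (eq_image e ho y z).1⟩)))
  · exact Or.inr (Or.inr (Or.inr (Or.inr ⟨e z₁, e z₂,
      fun hh => hne (e.injective hh), fun hh => hx1 (e.injective hh),
      fun hh => hy1 (e.injective hh), fun hh => hx2 (e.injective hh),
      fun hh => hy2 (e.injective hh),
      (eq_image e ho x z₁).1 e1, (eq_image e hi x z₂).1 e2,
      (eq_image e hi z₁ y).1 e3, (eq_image e ho z₂ y).1 e4⟩)))

end Transport

section Swap
variable {V₁ V₂ : Type*}

lemma strong_swap (E₁ : V₁ → V₁ → Prop) (E₂ : V₂ → V₂ → Prop) :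
    ∀ u v : V₁ × V₂, StrongAdj E₁ E₂ u v ↔
      StrongAdj E₂ E₁ (Equiv.prodComm V₁ V₂ u) (Equiv.prodComm V₁ V₂ v) := by
  intro u v
  simp only [StrongAdj, Equiv.prodComm_apply, Prod.fst_swap, Prod.snd_swap]
  tauto

lemma disp_swap (E₁ : V₁ → V₁ → Prop) (E₂ : V₂ → V₂ → Prop) (x y : V₁ × V₂) :
    Dispensable (StrongAdj E₁ E₂) x y ↔ Dispensable (StrongAdj E₂ E₁) x.swap y.swap := by
  constructor
  · exact disp_map (Equiv.prodComm V₁ V₂) (strong_swap E₁ E₂)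
  · intro h
    have := disp_map (Equiv.prodComm V₂ V₁) (strong_swap E₂ E₁) h
    simpa using this

end Swap


/-- If `H` and `K` are thin digraphs, then `𝕊(H ⊠ K) = 𝕊(H) □ 𝕊(K)`. -/
theorem skeleton_strong_eq_cart_skeletons {V₁ V₂ : Type*}
    (E₁ : V₁ → V₁ → Prop) (E₂ : V₂ → V₂ → Prop)
    (hirr₁ : Irreflexive E₁) (hirr₂ : Irreflexive E₂)
    (hthin₁ : Thin E₁) (hthin₂ : Thin E₂) :
    ∀ x y : V₁ × V₂, SkelAdj (StrongAdj E₁ E₂) x y ↔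
      CartAdj (SkelAdj E₁) (SkelAdj E₂) x y := by
  rintro ⟨a, b⟩ ⟨c, d⟩
  constructor
  · rintro ⟨hadj, hnd⟩
    by_cases hb : b = d
    · subst hb
      have hac : E₁ a c := by
        rcases hadj with ⟨h, _⟩ | ⟨_, h⟩ | ⟨_, h⟩
        · exact h
        · exact absurd h (hirr₂ b)
        · exact absurd h (hirr₂ b)
      exact Or.inl ⟨⟨hac, fun hd => hnd (lift_disp E₂ b hd)⟩, rfl⟩
    · by_cases ha : a = c
      · subst ha
        have hbd : E₂ b d := by
          rcases hadj with ⟨_, h⟩ | ⟨_, h⟩ | ⟨h, _⟩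
          · exact absurd h hb
          · exact h
          · exact absurd h (hirr₁ a)
        exact Or.inr ⟨rfl, hbd,
          fun hd => hnd ((disp_swap E₁ E₂ (a, b) (a, d)).2 (lift_disp E₁ a hd))⟩
      · rcases hadj with ⟨_, h⟩ | ⟨h, _⟩ | ⟨h1, h2⟩
        · exact absurd h hb
        · exact absurd h ha
        · exact absurd (diag_disp hthin₁ hthin₂ h1 h2 ha hb) hnd
  · rintro (⟨⟨hac, hnd₁⟩, hbd⟩ | ⟨heq, hE₂, hnd₂⟩)
    · cases hbd
      exact ⟨Or.inl ⟨hac, rfl⟩, fun hdisp => hnd₁ (proj_disp hthin₂ hac hdisp)⟩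
    · cases heq
      exact ⟨Or.inr (Or.inl ⟨rfl, hE₂⟩), fun hdisp =>
        hnd₂ (proj_disp hthin₁ hE₂ ((disp_swap E₁ E₂ (a, b) (a, d)).1 hdisp))⟩
end

section
/- Let G be a thin connected finite digraph and x, y vertices with N⁺[x] ⊊ N⁺[y] or N⁻[x] ⊊ N⁻[y]. Then x and y are joined by a walk in the underlying undirected graph of the Cartesian skeleton 𝕊(G). -/
/-!
Induct on pairs `(x, y)` with `N⁺[x] ⊆ N⁺[y]`, ordered first by the sizes of `N⁺[x] ∩ N⁺[y]`
and `N⁻[x] ∩ N⁻[y]` (larger is smaller) and then by the sizes of the symmetric differences.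
For such a pair `yx` is an arc. If it is not in `𝕊(G)`, the vertex `z` witnessing its
dispensability satisfies `N⁺[x] ⊆ N⁺[z] ⊆ N⁺[y]`, and in each of (D1), (D3), (D4), (D5) both
`(x, z)` and `(z, y)` are strictly smaller than `(x, y)`; (D2) cannot occur. Walks `x — z` and
`z — y` then exist by induction. The case `N⁻[x] ⊊ N⁻[y]` is the same statement for the reversed
digraph, whose skeleton is the reverse of `𝕊(G)`.
-/

open scoped symmDiff

section PairMeasure

variable {V : Type*}

/-- Larger intersections, then smaller symmetric differences, count as smaller; counting the
complement of the intersection keeps the first coordinate in `ℕ`. -/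
noncomputable def pairMeasure (A B : Set V) : ℕ ×ₗ ℕ :=
  toLex ((A ∩ B)ᶜ.ncard, (A ∆ B).ncard)

lemma pairMeasure_comm (A B : Set V) : pairMeasure A B = pairMeasure B A := by
  simp only [pairMeasure, Set.inter_comm A, symmDiff_comm A]

variable [Finite V]

lemma pairMeasure_lt_of_inter_ssubset {A B C D : Set V} (h : A ∩ B ⊂ C ∩ D) :
    pairMeasure C D < pairMeasure A B :=
  Prod.Lex.toLex_lt_toLex.mpr (Or.inl (Set.ncard_lt_ncard (compl_lt_compl_iff_lt.mpr h)))

lemma pairMeasure_lt_of_ssubset_of_ssubset {A B C : Set V} (hAC : A ⊂ C) (hCB : C ⊂ B) :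
    pairMeasure A C < pairMeasure A B ∧ pairMeasure C B < pairMeasure A B := by
  have hAB : A ⊆ B := hAC.subset.trans hCB.subset
  refine ⟨Prod.Lex.toLex_lt_toLex.mpr (Or.inr ⟨?_, Set.ncard_lt_ncard ?_⟩),
    pairMeasure_lt_of_inter_ssubset ?_⟩
  · rw [Set.inter_eq_left.mpr hAC.subset, Set.inter_eq_left.mpr hAB]
  · rw [symmDiff_of_le hAC.subset, symmDiff_of_le hAB]
    exact sdiff_lt_sdiff_right hCB hAC.subset
  · rwa [Set.inter_eq_left.mpr hAB, Set.inter_eq_left.mpr hCB.subset]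

lemma pairMeasure_self_lt {A B : Set V} (h : A ≠ B) : pairMeasure A A < pairMeasure A B := by
  by_cases hAB : A ⊆ B
  · refine Prod.Lex.toLex_lt_toLex.mpr (Or.inr ⟨?_, ?_⟩)
    · rw [Set.inter_self, Set.inter_eq_left.mpr hAB]
    · simp only [symmDiff_self, Set.bot_eq_empty, Set.ncard_empty]
      exact (Set.ncard_pos (Set.toFinite _)).mpr (Set.symmDiff_nonempty.mpr h)
  · exact pairMeasure_lt_of_inter_ssubset (by rwa [Set.inter_self, Set.inter_ssubset_left_iff])

lemma pairMeasure_self_le (A B : Set V) : pairMeasure A A ≤ pairMeasure A B := by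
  rcases eq_or_ne A B with rfl | h
  · exact le_rfl
  · exact (pairMeasure_self_lt h).le

end PairMeasure

section NCond

variable {V : Type*} {N : V → Set V} {x y z : V}

lemma NCond3.symm (h : NCond3 N x y z) : NCond3 N y x z := by
  rw [NCond3, Set.inter_comm (N y) (N x)]
  exact And.symm h

lemma WeakNCond.symm (h : WeakNCond N x y z) : WeakNCond N y x z := by
  rw [WeakNCond, Set.inter_comm (N y) (N x)]
  exact And.symm h

lemma NCond.symm (h : NCond N x y z) : NCond N y x z := by
  rcases h with h | h | h
  exacts [Or.inr (Or.inl h), Or.inl h, Or.inr (Or.inr h.symm)]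

lemma not_nCond3_of_subset (h : N x ⊆ N y) : ¬ NCond3 N x y z := by
  rintro ⟨hz, -⟩
  rw [Set.inter_eq_left.mpr h] at hz
  exact hz.not_subset Set.inter_subset_left

lemma NCond.ssubset_of_subset (hc : NCond N x y z) (h : N x ⊆ N y) :
    N x ⊂ N z ∧ N z ⊂ N y := by
  rcases hc with hc | hc | hc
  · exact hc
  · exact absurd h (hc.1.trans hc.2).not_subset
  · exact absurd hc (not_nCond3_of_subset h)

lemma subset_of_eq_or_eq (h : N x ⊆ N y) (hz : N x = N z ∨ N y = N z) :
    N x ⊆ N z ∧ N z ⊆ N y := by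
  rcases hz with hz | hz <;> rw [← hz]
  exacts [⟨le_rfl, h⟩, ⟨h, le_rfl⟩]

variable [Finite V]

lemma NCond.pairMeasure_lt (h : NCond N x y z) :
    pairMeasure (N x) (N z) < pairMeasure (N x) (N y) ∧
      pairMeasure (N z) (N y) < pairMeasure (N x) (N y) := by
  rcases h with ⟨hxz, hzy⟩ | ⟨hyz, hzx⟩ | ⟨hxz, hzy⟩
  · exact pairMeasure_lt_of_ssubset_of_ssubset hxz hzy
  · simp only [pairMeasure_comm (N x), pairMeasure_comm (N z) (N y)]
    exact (pairMeasure_lt_of_ssubset_of_ssubset hyz hzx).symm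
  · rw [Set.inter_comm (N y)] at hzy
    exact ⟨pairMeasure_lt_of_inter_ssubset hxz, pairMeasure_lt_of_inter_ssubset hzy⟩

lemma pairMeasure_le_of_eq_or_eq (h : N x = N z ∨ N y = N z) :
    pairMeasure (N x) (N z) ≤ pairMeasure (N x) (N y) ∧
      pairMeasure (N z) (N y) ≤ pairMeasure (N x) (N y) := by
  rcases h with h | h <;> rw [← h]
  · exact ⟨pairMeasure_self_le _ _, le_rfl⟩
  · exact ⟨le_rfl, pairMeasure_comm (N x) _ ▸ pairMeasure_self_le _ _⟩

end NCond

section Dispensable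

variable {V : Type*} {E : V → V → Prop} {x y : V}

lemma Dispensable.symm (h : Dispensable E x y) : Dispensable E y x := by
  rcases h with ⟨z, hout, hin⟩ | ⟨z₁, z₂, ⟨h₁, w₁⟩, ⟨h₂, w₂⟩⟩ | ⟨z, hout, hin⟩ | ⟨z, hin, hout⟩ |
    ⟨z₁, z₂, h, h₁x, h₁y, h₂x, h₂y, e₁, e₂, e₃, e₄⟩
  · exact Or.inl ⟨z, hout.symm, hin.symm⟩
  · exact Or.inr (Or.inl ⟨z₁, z₂, ⟨h₁.symm, w₁.symm⟩, ⟨h₂.symm, w₂.symm⟩⟩)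
  · exact Or.inr (Or.inr (Or.inl ⟨z, hout.symm, hin.symm⟩))
  · exact Or.inr (Or.inr (Or.inr (Or.inl ⟨z, hin.symm, hout.symm⟩)))
  · exact Or.inr (Or.inr (Or.inr (Or.inr
      ⟨z₂, z₁, h.symm, h₂y, h₂x, h₁y, h₁x, e₄.symm, e₃.symm, e₂.symm, e₁.symm⟩)))

/-- `Nout (flip E)` is `Nin E` by definition, so reversal only permutes the clauses of
(D1)–(D5). -/
lemma Dispensable.flip (h : Dispensable E x y) : Dispensable (flip E) x y := by
  rcases h with ⟨z, hout, hin⟩ | ⟨z₁, z₂, h₁, h₂⟩ | h | h |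
    ⟨z₁, z₂, h, h₁x, h₁y, h₂x, h₂y, e₁, e₂, e₃, e₄⟩
  · exact Or.inl ⟨z, hin, hout⟩
  · exact Or.inr (Or.inl ⟨z₂, z₁, h₂, h₁⟩)
  · exact Or.inr (Or.inr (Or.inr (Or.inl h)))
  · exact Or.inr (Or.inr (Or.inl h))
  · exact Or.inr (Or.inr (Or.inr (Or.inr
      ⟨z₂, z₁, h.symm, h₂x, h₂y, h₁x, h₁y, e₂, e₁, e₄, e₃⟩)))

lemma skelAdj_flip {a b : V} : SkelAdj (flip E) a b ↔ SkelAdj E b a := by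
  refine and_congr_right fun _ => not_congr ?_
  exact ⟨fun h => h.flip.symm, fun h => h.symm.flip⟩

lemma Thin.flip (h : Thin E) : Thin (flip E) := fun a b hout hin => h a b hin hout

end Dispensable

section Skeleton

variable {V : Type*} {E : V → V → Prop}

lemma reflTransGen_skelAdj_of_flip {x y : V}
    (h : Relation.ReflTransGen (fun a b => SkelAdj (flip E) a b ∨ SkelAdj (flip E) b a) x y) :
    Relation.ReflTransGen (fun a b => SkelAdj E a b ∨ SkelAdj E b a) x y :=
  Relation.ReflTransGen.mono
    (fun _ _ hab => by rwa [skelAdj_flip, skelAdj_flip, or_comm] at hab) _ _ h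

noncomputable def nbhdMeasure (E : V → V → Prop) (x y : V) : ℕ ×ₗ ℕ :=
  pairMeasure (Nout E x) (Nout E y) + pairMeasure (Nin E x) (Nin E y)

variable [Finite V]

lemma exists_between_of_dispensable (hthin : Thin E) {x y : V}
    (hsub : Nout E x ⊆ Nout E y) (hd : Dispensable E x y) :
    ∃ z, Nout E x ⊆ Nout E z ∧ Nout E z ⊆ Nout E y ∧
      nbhdMeasure E x z < nbhdMeasure E x y ∧ nbhdMeasure E z y < nbhdMeasure E x y := by
  rcases hd with ⟨z, hout, hin⟩ | ⟨z, -, ⟨hout, -⟩, -⟩ | ⟨z, hout, hin⟩ | ⟨z, hin, hout⟩ |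
    ⟨z, w, -, -, hzy, -, hwy, hxz, hxw, hzy', hwy'⟩
  · obtain ⟨hxz, hzy⟩ := hout.ssubset_of_subset hsub
    exact ⟨z, hxz.subset, hzy.subset, add_lt_add hout.pairMeasure_lt.1 hin.pairMeasure_lt.1,
      add_lt_add hout.pairMeasure_lt.2 hin.pairMeasure_lt.2⟩
  · exact absurd hout (not_nCond3_of_subset hsub)
  · obtain ⟨hxz, hzy⟩ := hout.ssubset_of_subset hsub
    exact ⟨z, hxz.subset, hzy.subset,
      add_lt_add_of_lt_of_le hout.pairMeasure_lt.1 (pairMeasure_le_of_eq_or_eq hin).1,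
      add_lt_add_of_lt_of_le hout.pairMeasure_lt.2 (pairMeasure_le_of_eq_or_eq hin).2⟩
  · obtain ⟨hxz, hzy⟩ := subset_of_eq_or_eq hsub hout
    exact ⟨z, hxz, hzy,
      add_lt_add_of_le_of_lt (pairMeasure_le_of_eq_or_eq hout).1 hin.pairMeasure_lt.1,
      add_lt_add_of_le_of_lt (pairMeasure_le_of_eq_or_eq hout).2 hin.pairMeasure_lt.2⟩
  · -- (D5): by thinness, `z` and `w` differ from `y`, so `x` and `y` differ in both neighborhoods.
    have hneOut : Nout E x ≠ Nout E y := fun h => hzy (hthin z y (hxz ▸ h) hzy')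
    have hneIn : Nin E x ≠ Nin E y := fun h => hwy (hthin w y hwy' (hxw ▸ h))
    refine ⟨z, hxz ▸ le_rfl, hxz ▸ hsub, ?_, ?_⟩
    · rw [nbhdMeasure, nbhdMeasure, ← hxz, hzy']
      exact add_lt_add_of_lt_of_le (pairMeasure_self_lt hneOut) le_rfl
    · rw [nbhdMeasure, nbhdMeasure, ← hxz, hzy', pairMeasure_comm (Nin E x)]
      exact add_lt_add_of_le_of_lt le_rfl (pairMeasure_self_lt hneIn.symm)

theorem reflTransGen_skelAdj_of_nout_subset (hthin : Thin E) {x y : V} (hne : x ≠ y)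
    (hsub : Nout E x ⊆ Nout E y) :
    Relation.ReflTransGen (fun a b => SkelAdj E a b ∨ SkelAdj E b a) x y := by
  induction hm : nbhdMeasure E x y using WellFoundedLT.induction generalizing x y with
  | _ m ih =>
    have hyx : E y x := (hsub (Set.mem_insert x _)).resolve_left hne
    by_cases hskel : SkelAdj E y x
    · exact .single (Or.inr hskel)
    have hd : Dispensable E x y := by_contra fun hd => hskel ⟨hyx, mt Dispensable.symm hd⟩
    obtain ⟨z, hxz, hzy, hm₁, hm₂⟩ := exists_between_of_dispensable hthin hsub hd
    have hx : x ≠ z := fun h => hm₂.ne (h ▸ rfl)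
    have hy : z ≠ y := fun h => hm₁.ne (h ▸ rfl)
    exact (ih _ (hm ▸ hm₁) hx hxz rfl).trans (ih _ (hm ▸ hm₂) hy hzy rfl)

end Skeleton

theorem skeleton_walk_of_nbhd_ssubset_general {V : Type*} [Fintype V]
    (E : V → V → Prop) (hthin : Thin E)
    (x y : V) (h : Nout E x ⊂ Nout E y ∨ Nin E x ⊂ Nin E y) :
    Relation.ReflTransGen (fun a b => SkelAdj E a b ∨ SkelAdj E b a) x y := by
  rcases h with h | h
  · exact reflTransGen_skelAdj_of_nout_subset hthin (fun hxy => h.ne (hxy ▸ rfl)) h.subset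
  · exact reflTransGen_skelAdj_of_flip
      (reflTransGen_skelAdj_of_nout_subset hthin.flip (fun hxy => h.ne (hxy ▸ rfl)) h.subset)

/-- In a thin connected finite digraph, if `N⁺[x] ⊊ N⁺[y]` or `N⁻[x] ⊊ N⁻[y]`, then `x`
and `y` are joined by a walk in the underlying undirected graph of the Cartesian
skeleton `𝕊(G)`. -/
theorem skeleton_walk_of_nbhd_ssubset {V : Type*} [Fintype V]
    (E : V → V → Prop) (hirr : Irreflexive E) (hthin : Thin E)
    (hconn : ∀ x y : V, Relation.ReflTransGen (fun a b => E a b ∨ E b a) x y)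
    (x y : V) (h : Nout E x ⊂ Nout E y ∨ Nin E x ⊂ Nin E y) :
    Relation.ReflTransGen (fun a b => SkelAdj E a b ∨ SkelAdj E b a) x y :=
  skeleton_walk_of_nbhd_ssubset_general E hthin x y h
end
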